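/- arXiv:math/0508189 — 2 statements merged into one kernel-verified Lean document; each statement's English description precedes it below -/
import Mathlib

section
/- Let h be an automorphism of a module M with h^d = identity and 1 + h + ... + h^{d-1} = 0. Then for 0 < k < d, the image of 1 + h + ... + h^{d-k-1} equals the image of 1 + h + ... + h^{k-1} composed with the automorphism h^k (up to sign), and in particular the cokernels of 1 + h + ... + h^{k-1} and 1 + h + ... + h^{d-k-1} are isomorphic. -/
/-- Part (iii) of the Durfee–Kauffman lemma, algebraic form: if `h^d = 1` and
`1 + h + ⋯ + h^(d-1) = 0`, then for `0 < k < d`,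
`1 + h + ⋯ + h^(d-k-1) = -(h^(d-k) ∘ (1 + h + ⋯ + h^(k-1)))`, and the two
partial sums have isomorphic cokernels. -/
theorem stmt_6 {R : Type*} {M : Type*} [CommRing R] [AddCommGroup M] [Module R M]
    (h : Module.End R M) (hunit : IsUnit h) (d : ℕ) (hper : h ^ d = 1)
    (hsum : ∑ j ∈ Finset.range d, h ^ j = 0) (k : ℕ) (hk0 : 0 < k) (hkd : k < d) :
    (∑ j ∈ Finset.range (d - k), h ^ j) =
      -(h ^ (d - k) * ∑ j ∈ Finset.range k, h ^ j) ∧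
    Nonempty ((M ⧸ LinearMap.range (∑ j ∈ Finset.range (d - k), h ^ j)) ≃ₗ[R]
      (M ⧸ LinearMap.range (∑ j ∈ Finset.range k, h ^ j))) := by
  have hdk : d - k + k = d := Nat.sub_add_cancel hkd.le
  have key : (∑ j ∈ Finset.range (d - k), h ^ j) =
      -(h ^ (d - k) * ∑ j ∈ Finset.range k, h ^ j) := by
    have := Finset.sum_range_add (fun j => h ^ j) (d - k) k
    rw [hdk, hsum] at this
    have h2 : (∑ i ∈ Finset.range k, h ^ (d - k + i)) =
        h ^ (d - k) * ∑ j ∈ Finset.range k, h ^ j := by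
      rw [Finset.mul_sum]
      exact Finset.sum_congr rfl fun i _ => pow_add h (d - k) i
    rw [h2] at this
    exact eq_neg_of_add_eq_zero_left this.symm
  refine ⟨key, ?_⟩
  have hu : IsUnit (h ^ (d - k)) := hunit.pow _
  let e : M ≃ₗ[R] M := LinearEquiv.ofBijective (h ^ (d - k) : Module.End R M)
    (Module.End.isUnit_iff _ |>.mp hu)
  have hmap : (LinearMap.range (∑ j ∈ Finset.range k, h ^ j)).map (e : M →ₗ[R] M) =
      LinearMap.range (∑ j ∈ Finset.range (d - k), h ^ j) := by
    rw [key]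
    rw [LinearMap.range_neg]
    rw [show ((h ^ (d - k) : Module.End R M) * ∑ j ∈ Finset.range k, h ^ j) =
      ((h ^ (d - k) : Module.End R M) : M →ₗ[R] M).comp (∑ j ∈ Finset.range k, h ^ j) from rfl]
    rw [LinearMap.range_comp]
    rfl
  exact ⟨(Submodule.Quotient.equiv _ _ e hmap).symm⟩
end

section
/- For N a common multiple of positive integers a_0, ..., a_n with n even, define t(a) = (-1)^{n/2}/N · Σ_{j=0}^{N-1} cot(π(2j+1)/(2N)) · ∏_{i=0}^{n} cot(π(2j+1)/(2a_i)). Then the value of this expression is independent of the choice of common multiple N. -/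
open Real Finset Function

/-!
For `P j = ∏ i, cot (π (2j+1) / (2 aᵢ))`, which is `N`-periodic in `j` whenever every `aᵢ ∣ N`,
the normalised sum `(1/N) ∑_{j<N} cot (π (2j+1) / (2N)) P j` does not change when `N` is replaced
by a multiple `kN`: writing `j = qN + r`, the inner sum over `q` collapses by the cotangent
multiplication formula `∑_{q<k} cot (x + qπ/k) = k cot (kx)`, the arguments `kx = π (2r+1) / (2N)`
never being multiples of `π`. Hence `N` and `N'` both give the value for `N N'`.
The multiplication formula follows from `cot z = i + 2i / (e^{2iz} - 1)` and the partial fraction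
identity `∑_{q<k} 1 / (w ζ^q - 1) = k / (w^k - 1)` over the `k`-th roots of unity `ζ^q`.
-/

theorem IsPrimitiveRoot.mul_pow_pow_eq_pow {K : Type*} [CommMonoid K] {ζ : K} {k : ℕ}
    (hζ : IsPrimitiveRoot ζ k) (w : K) (q : ℕ) : (w * ζ ^ q) ^ k = w ^ k := by
  rw [mul_pow, ← pow_mul, mul_comm q, pow_mul, hζ.pow_eq_one, one_pow, mul_one]

theorem IsPrimitiveRoot.sum_one_div_mul_pow_sub_one {K : Type*} [Field K] {ζ w : K} {k : ℕ}
    (hζ : IsPrimitiveRoot ζ k) (hw : w ^ k ≠ 1) :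
    ∑ q ∈ range k, 1 / (w * ζ ^ q - 1) = k / (w ^ k - 1) := by
  have hk : k ≠ 0 := by rintro rfl; exact hw (pow_zero w)
  have geom : ∀ q, 1 / (w * ζ ^ q - 1) = (∑ m ∈ range k, (w * ζ ^ q) ^ m) / (w ^ k - 1) := by
    intro q
    have hu : w * ζ ^ q - 1 ≠ 0 := fun h ↦ hw <| by
      rw [← hζ.mul_pow_pow_eq_pow w q, sub_eq_zero.mp h, one_pow]
    rw [eq_div_iff (sub_ne_zero.mpr hw), ← hζ.mul_pow_pow_eq_pow w q, ← geom_sum_mul]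
    field_simp
  have orth : ∀ m ∈ range k, ∑ q ∈ range k, (w * ζ ^ q) ^ m = if m = 0 then (k : K) else 0 := by
    intro m hm
    split_ifs with hm0
    · simp [hm0]
    · simp_rw [mul_pow, ← pow_mul, mul_comm _ m, pow_mul]
      rw [← mul_sum, geom_sum_eq (hζ.pow_ne_one_of_pos_of_lt hm0 (mem_range.mp hm)), ← pow_mul,
        mul_comm m, pow_mul, hζ.pow_eq_one, one_pow, sub_self, zero_div, mul_zero]
  rw [sum_congr rfl fun q _ ↦ geom q, ← sum_div, sum_comm, sum_congr rfl orth]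
  simp [Nat.pos_of_ne_zero hk]

namespace Complex

theorem exp_two_mul_I_mul_ne_one {z : ℂ} (hz : sin z ≠ 0) : exp (2 * I * z) ≠ 1 := by
  rw [Ne, exp_eq_one_iff]
  rintro ⟨n, hn⟩
  exact hz (sin_eq_zero_iff.mpr ⟨n, mul_left_cancel₀ (by simp : (2 * I) ≠ 0)
    (by linear_combination hn)⟩)

theorem cot_eq_I_add_div {z : ℂ} (hz : exp (2 * I * z) ≠ 1) :
    cot z = I + 2 * I / (exp (2 * I * z) - 1) := by
  have h₁ : exp (2 * I * z) - 1 ≠ 0 := sub_ne_zero.mpr hz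
  have h₂ : 1 - exp (2 * I * z) ≠ 0 := fun h ↦ h₁ (by linear_combination -h)
  rw [cot_eq_exp_ratio]
  field_simp
  linear_combination (exp (2 * I * z) - 1) * (exp (2 * I * z) + 1) * I_sq

theorem sum_cot_add_mul_pi_div {k : ℕ} {z : ℂ} (hz : sin (k * z) ≠ 0) :
    ∑ q ∈ range k, cot (z + q * π / k) = k * cot (k * z) := by
  have hk : k ≠ 0 := by rintro rfl; simp at hz
  set w := exp (2 * I * z)
  set ζ := exp (2 * π * I / k)
  have hζ : IsPrimitiveRoot ζ k := isPrimitiveRoot_exp k hk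
  have hwk : w ^ k = exp (2 * I * (k * z)) := by rw [← exp_nat_mul]; ring_nf
  have hw : w ^ k ≠ 1 := hwk ▸ exp_two_mul_I_mul_ne_one hz
  have hshift : ∀ q : ℕ, exp (2 * I * (z + q * π / k)) = w * ζ ^ q := by
    intro q
    rw [← exp_nat_mul, ← exp_add]
    congr 1
    field_simp
  have hshift_ne : ∀ q : ℕ, exp (2 * I * (z + q * π / k)) ≠ 1 := fun q h ↦ hw <| by
    rw [← hζ.mul_pow_pow_eq_pow w q, ← hshift, h, one_pow]
  calc ∑ q ∈ range k, cot (z + q * π / k)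
      = ∑ q ∈ range k, (I + 2 * I * (1 / (w * ζ ^ q - 1))) := by
        refine sum_congr rfl fun q _ ↦ ?_
        rw [cot_eq_I_add_div (hshift_ne q), hshift]
        ring
    _ = k * (I + 2 * I / (w ^ k - 1)) := by
        rw [sum_add_distrib, ← mul_sum, hζ.sum_one_div_mul_pow_sub_one hw]
        simp
        ring
    _ = k * cot (k * z) := by rw [cot_eq_I_add_div (hwk ▸ hw), hwk]

end Complex

theorem Real.sum_cot_add_mul_pi_div {k : ℕ} {x : ℝ} (hx : sin (k * x) ≠ 0) :
    ∑ q ∈ range k, cot (x + q * π / k) = k * cot (k * x) := by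
  apply Complex.ofReal_injective
  push_cast [Complex.ofReal_cot]
  exact Complex.sum_cot_add_mul_pi_div (by exact_mod_cast hx)

theorem Real.cot_periodic : Periodic cot π := by
  intro x
  rw [← tan_inv_eq_cot, ← tan_inv_eq_cot, tan_periodic x]

theorem periodic_cot_pi_mul_odd_div {a M : ℕ} (h : a ∣ M) :
    Periodic (fun j : ℕ ↦ cot (π * (2 * j + 1) / (2 * a))) M := by
  obtain ⟨c, rfl⟩ := h
  rw [mul_comm a c]
  refine Periodic.nat_mul (fun j ↦ ?_) c
  rcases a.eq_zero_or_pos with rfl | ha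
  · simp
  · have ha' : (a : ℝ) ≠ 0 := by positivity
    rw [← cot_periodic (π * (2 * j + 1) / (2 * a))]
    push_cast
    congr 1
    field_simp
    ring

theorem sin_pi_mul_odd_div_ne_zero {N : ℕ} (hN : 0 < N) (r : ℕ) :
    sin (π * (2 * r + 1) / (2 * N)) ≠ 0 := by
  rw [Ne, sin_eq_zero_iff]
  rintro ⟨m, hm⟩
  have hreal : (2 * (m * N) : ℝ) = 2 * r + 1 := by
    rw [eq_div_iff (by positivity)] at hm
    exact mul_left_cancel₀ pi_ne_zero (by linear_combination hm)
  have hint : (2 * (m * N) : ℤ) = 2 * r + 1 := by exact_mod_cast hreal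
  omega

theorem Finset.sum_range_mul_eq_sum_sum {M : Type*} [AddCommMonoid M] (f : ℕ → M) (k N : ℕ) :
    ∑ j ∈ range (k * N), f j = ∑ q ∈ range k, ∑ r ∈ range N, f (q * N + r) := by
  induction k with
  | zero => simp
  | succ k ih => rw [Nat.succ_mul, sum_range_add, ih, sum_range_succ]

theorem sum_cot_mul_of_periodic {P : ℕ → ℝ} {N k : ℕ} (hP : Periodic P N) (hN : 0 < N)
    (hk : 0 < k) :
    ∑ j ∈ range (k * N), cot (π * (2 * j + 1) / (2 * ((k * N : ℕ) : ℝ))) * P j =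
      k * ∑ r ∈ range N, cot (π * (2 * r + 1) / (2 * N)) * P r := by
  rw [sum_range_mul_eq_sum_sum, sum_comm, mul_sum]
  refine sum_congr rfl fun r _ ↦ ?_
  set x := π * (2 * r + 1) / (2 * ((k * N : ℕ) : ℝ))
  have hkx : k * x = π * (2 * r + 1) / (2 * N) := by
    simp only [x]; push_cast; field_simp
  have hshift : ∀ q : ℕ, π * (2 * ((q * N + r : ℕ) : ℝ) + 1) / (2 * ((k * N : ℕ) : ℝ)) =
      x + q * π / k := by
    intro q; simp only [x]; push_cast; field_simp; ring
  have hPq : ∀ q : ℕ, P (q * N + r) = P r := fun q ↦ by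
    simpa [add_comm] using hP.nat_mul q r
  simp only [hshift, hPq, ← sum_mul]
  rw [sum_cot_add_mul_pi_div (hkx ▸ sin_pi_mul_odd_div_ne_zero hN r), hkx, mul_assoc]

theorem stmt_7_general (n : ℕ) (a : Fin (n + 1) → ℕ)
    (N N' : ℕ) (hN : 0 < N) (hN' : 0 < N')
    (hdvd : ∀ i, a i ∣ N) (hdvd' : ∀ i, a i ∣ N') :
    ((-1 : ℝ) ^ (n / 2) / N) * ∑ j ∈ Finset.range N,
        (Real.cot (π * (2 * j + 1) / (2 * N)) *
          ∏ i, Real.cot (π * (2 * j + 1) / (2 * a i))) =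
    ((-1 : ℝ) ^ (n / 2) / N') * ∑ j ∈ Finset.range N',
        (Real.cot (π * (2 * j + 1) / (2 * N')) *
          ∏ i, Real.cot (π * (2 * j + 1) / (2 * a i))) := by
  have hP : ∀ M : ℕ, (∀ i, a i ∣ M) →
      Periodic (fun j : ℕ ↦ ∏ i, cot (π * (2 * j + 1) / (2 * a i))) M :=
    fun M hM j ↦ prod_congr rfl fun i _ ↦ periodic_cot_pi_mul_odd_div (hM i) j
  have h₁ := sum_cot_mul_of_periodic (hP N hdvd) hN hN'
  have h₂ := sum_cot_mul_of_periodic (hP N' hdvd') hN' hN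
  rw [mul_comm N' N, h₂] at h₁
  rw [div_mul_eq_mul_div, div_mul_eq_mul_div, div_eq_div_iff (by positivity) (by positivity)]
  linear_combination -(-1 : ℝ) ^ (n / 2) * h₁

/-- Zagier's cotangent formula for the signature `t(a)` is independent of the
choice of common multiple `N` of the exponents `a_i`. -/
theorem stmt_7 (n : ℕ) (hn : Even n) (a : Fin (n + 1) → ℕ) (ha : ∀ i, 0 < a i)
    (N N' : ℕ) (hN : 0 < N) (hN' : 0 < N')
    (hdvd : ∀ i, a i ∣ N) (hdvd' : ∀ i, a i ∣ N') :
    ((-1 : ℝ) ^ (n / 2) / N) * ∑ j ∈ Finset.range N,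
        (Real.cot (π * (2 * j + 1) / (2 * N)) *
          ∏ i, Real.cot (π * (2 * j + 1) / (2 * a i))) =
    ((-1 : ℝ) ^ (n / 2) / N') * ∑ j ∈ Finset.range N',
        (Real.cot (π * (2 * j + 1) / (2 * N')) *
          ∏ i, Real.cot (π * (2 * j + 1) / (2 * a i))) :=
  stmt_7_general n a N N' hN hN' hdvd hdvd'
end
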